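/- Let r ≥ 0 and let X be a finite quasimetric space. If M and M' are both r-minimal models of X, then M and M' are isometric (there is a distance-preserving bijection M → M'). In other words, the r-minimal model of a finite quasimetric space is unique up to isometry. -/

import Mathlib

/-!
Composing the two homotopy equivalences gives short maps `f : M → M'` and `g : M' → M` with
`g ∘ f ∼ id` and `f ∘ g ∼ id`. A short self-map `h ∼ id` of a finite `r`-minimal space is
surjective: some iterate `e = h^[k]` is idempotent and still `∼ id`, so `range e` is an
`r`-deformation retract, hence everything. Thus `g ∘ f`, `f ∘ g` and hence `f` are bijections.
A short bijection of a finite space is an isometry, since its inverse is one of its iterates and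
hence short; applied to `g ∘ f`, this squeezes `d(f x, f x')` between `d(x, x')` on both sides.
-/

open scoped ENNReal

class QuasiMetric (X : Type*) where
  qdist : X → X → ℝ≥0∞
  qdist_triangle : ∀ x y z : X, qdist x z ≤ qdist x y + qdist y z
  qdist_eq_zero_iff : ∀ x y : X, qdist x y = 0 ↔ x = y

open QuasiMetric

instance {X : Type*} [QuasiMetric X] (A : Set X) : QuasiMetric A where
  qdist a b := qdist a.1 b.1
  qdist_triangle a b c := qdist_triangle a.1 b.1 c.1
  qdist_eq_zero_iff a b := (qdist_eq_zero_iff a.1 b.1).trans Subtype.coe_inj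

/-- A map of quasimetric spaces is short (1-Lipschitz). -/
def IsShort {X Y : Type*} [QuasiMetric X] [QuasiMetric Y] (f : X → Y) : Prop :=
  ∀ x x' : X, qdist (f x) (f x') ≤ qdist x x'

/-- The distance `d(f,g) = sup_x d(f x, g x)` on maps. -/
noncomputable def mapDist {X Y : Type*} [QuasiMetric X] [QuasiMetric Y] (f g : X → Y) : ℝ≥0∞ :=
  ⨆ x : X, qdist (f x) (g x)

/-- Two short maps are `r`-homotopic if they are connected by a chain of short maps
in which each consecutive pair is at distance `≤ r` in one direction or the other. -/
def MapHomotopic {X Y : Type*} [QuasiMetric X] [QuasiMetric Y] (r : ℝ) (f g : X → Y) : Prop :=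
  Relation.ReflTransGen
    (fun u v : X → Y => IsShort u ∧ IsShort v ∧
      (mapDist u v ≤ ENNReal.ofReal r ∨ mapDist v u ≤ ENNReal.ofReal r)) f g

/-- `A ⊆ X` is an `r`-deformation retract of `X`. -/
def IsDefRetract {X : Type*} [QuasiMetric X] (r : ℝ) (A : Set X) : Prop :=
  ∃ ρ : X → A, IsShort ρ ∧ (∀ a : A, ρ (a : X) = a) ∧
    MapHomotopic r (fun x => (ρ x : X)) id

/-- A quasimetric space is `r`-minimal if it has no proper `r`-deformation retract. -/
def RMinimal (r : ℝ) (X : Type*) [QuasiMetric X] : Prop :=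
  ∀ A : Set X, IsDefRetract r A → A = Set.univ

/-- A distance-preserving bijection. -/
def IsIsometry {X Y : Type*} [QuasiMetric X] [QuasiMetric Y] (f : X → Y) : Prop :=
  Function.Bijective f ∧ ∀ x x' : X, qdist (f x) (f x') = qdist x x'

/-- Two quasimetric spaces are `r`-homotopy equivalent. -/
def RHomotopyEquivalent (r : ℝ) (X Y : Type*) [QuasiMetric X] [QuasiMetric Y] : Prop :=
  ∃ f : X → Y, ∃ g : Y → X, IsShort f ∧ IsShort g ∧
    MapHomotopic r (g ∘ f) id ∧ MapHomotopic r (f ∘ g) id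

section Finite

variable {α : Type*}

lemma Function.iterate_add_mul_eq_of_iterate_add_eq {f : α → α} {i p : ℕ}
    (hp : f^[i + p] = f^[i]) {m : ℕ} (hm : i ≤ m) (n : ℕ) : f^[m + n * p] = f^[m] := by
  induction n with
  | zero => simp
  | succ n ih =>
    calc f^[m + (n + 1) * p] = f^[m + n * p - i] ∘ f^[i + p] := by
          rw [← Function.iterate_add]; congr 1; rw [add_mul]; omega
      _ = f^[m + n * p] := by
          rw [hp, ← Function.iterate_add]; congr 1; omega
      _ = f^[m] := ih

lemma Finite.exists_pos_iterate_idempotent [Finite α] (f : α → α) :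
    ∃ k, 0 < k ∧ f^[k] ∘ f^[k] = f^[k] := by
  obtain ⟨i, j, hne, hij⟩ := Finite.exists_ne_map_eq_of_infinite (fun n : ℕ => f^[n])
  wlog hlt : i < j generalizing i j
  · exact this j i hne.symm hij.symm (by omega)
  have hp : f^[i + (j - i)] = f^[i] := by rw [Nat.add_sub_cancel' hlt.le]; exact hij.symm
  -- `k = (i + 1) * (j - i)` is a multiple of the eventual period beyond the preperiod `i`
  refine ⟨(i + 1) * (j - i), Nat.mul_pos i.succ_pos (by omega), ?_⟩
  rw [← Function.iterate_add]
  exact Function.iterate_add_mul_eq_of_iterate_add_eq hp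
    ((Nat.le_succ i).trans (Nat.le_mul_of_pos_right _ (by omega))) _

end Finite

section Short

variable {X Y Z : Type*} [QuasiMetric X] [QuasiMetric Y] [QuasiMetric Z]

lemma IsShort.id : IsShort (id : X → X) := fun _ _ => le_rfl

lemma IsShort.comp {f : Y → Z} {g : X → Y} (hf : IsShort f) (hg : IsShort g) :
    IsShort (f ∘ g) := fun x x' => (hf _ _).trans (hg x x')

lemma IsShort.iterate {h : X → X} (hh : IsShort h) (n : ℕ) : IsShort h^[n] := by
  induction n with
  | zero => exact IsShort.id
  | succ n ih => rw [Function.iterate_succ]; exact ih.comp hh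

lemma IsShort.qdist_eq_of_bijective [Finite X] {h : X → X} (hs : IsShort h)
    (hb : Function.Bijective h) (x y : X) : qdist (h x) (h y) = qdist x y := by
  set σ := Equiv.ofBijective h hb
  obtain ⟨n, hn⟩ := Nat.exists_eq_add_one_of_ne_zero (orderOf_pos σ).ne'
  have hinv : Function.LeftInverse h^[n] h := congrFun <| show h^[n] ∘ h = _root_.id by
    rw [← Function.iterate_succ]
    exact (Equiv.Perm.coe_pow σ _).symm.trans (congrArg _ (hn ▸ pow_orderOf_eq_one σ))
  refine le_antisymm (hs x y) ?_
  calc qdist x y = qdist (h^[n] (h x)) (h^[n] (h y)) := by rw [hinv x, hinv y]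
    _ ≤ qdist (h x) (h y) := hs.iterate n _ _

lemma mapDist_comp_left_le {a : Y → Z} (ha : IsShort a) (u v : X → Y) :
    mapDist (a ∘ u) (a ∘ v) ≤ mapDist u v :=
  iSup_le fun x => (ha _ _).trans (le_iSup (fun x => qdist (u x) (v x)) x)

lemma mapDist_comp_right_le (u v : Y → Z) (b : X → Y) :
    mapDist (u ∘ b) (v ∘ b) ≤ mapDist u v :=
  iSup_le fun x => le_iSup (fun y => qdist (u y) (v y)) (b x)

end Short

namespace MapHomotopic

variable {X Y Z : Type*} [QuasiMetric X] [QuasiMetric Y] [QuasiMetric Z] {r : ℝ}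

lemma comp_left {a : Y → Z} (ha : IsShort a) {u v : X → Y} (h : MapHomotopic r u v) :
    MapHomotopic r (a ∘ u) (a ∘ v) :=
  Relation.ReflTransGen.lift (a ∘ ·)
    (fun p q ⟨hp, hq, hd⟩ => ⟨ha.comp hp, ha.comp hq,
      hd.imp (le_trans (mapDist_comp_left_le ha p q)) (le_trans (mapDist_comp_left_le ha q p))⟩)
    _ _ h

lemma comp_right {b : X → Y} (hb : IsShort b) {u v : Y → Z} (h : MapHomotopic r u v) :
    MapHomotopic r (u ∘ b) (v ∘ b) :=
  Relation.ReflTransGen.lift (· ∘ b)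
    (fun p q ⟨hp, hq, hd⟩ => ⟨hp.comp hb, hq.comp hb,
      hd.imp (le_trans (mapDist_comp_right_le p q b)) (le_trans (mapDist_comp_right_le q p b))⟩)
    _ _ h

lemma iterate_id {h : X → X} (hs : IsShort h) (hh : MapHomotopic r h id) (n : ℕ) :
    MapHomotopic r h^[n] id := by
  induction n with
  | zero => exact Relation.ReflTransGen.refl
  | succ n ih =>
    rw [Function.iterate_succ']
    exact (ih.comp_left hs).trans hh

end MapHomotopic

namespace RHomotopyEquivalent

variable {X Y Z : Type*} [QuasiMetric X] [QuasiMetric Y] [QuasiMetric Z] {r : ℝ}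

lemma symm (h : RHomotopyEquivalent r X Y) : RHomotopyEquivalent r Y X :=
  let ⟨f, g, hf, hg, hgf, hfg⟩ := h
  ⟨g, f, hg, hf, hfg, hgf⟩

lemma trans (h₁ : RHomotopyEquivalent r X Y) (h₂ : RHomotopyEquivalent r Y Z) :
    RHomotopyEquivalent r X Z := by
  obtain ⟨f₁, g₁, hf₁, hg₁, hgf₁, hfg₁⟩ := h₁
  obtain ⟨f₂, g₂, hf₂, hg₂, hgf₂, hfg₂⟩ := h₂
  refine ⟨f₂ ∘ f₁, g₁ ∘ g₂, hf₂.comp hf₁, hg₁.comp hg₂, ?_, ?_⟩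
  · exact ((hgf₂.comp_right hf₁).comp_left hg₁).trans hgf₁
  · exact ((hfg₁.comp_right hg₂).comp_left hf₂).trans hfg₂

end RHomotopyEquivalent

section Minimal

variable {X : Type*} [QuasiMetric X] {r : ℝ}

lemma isDefRetract_range_of_idempotent {e : X → X} (hs : IsShort e) (hidem : e ∘ e = e)
    (he : MapHomotopic r e id) : IsDefRetract r (Set.range e) :=
  ⟨Set.rangeFactorization e, hs, fun ⟨_, x, hx⟩ => Subtype.ext (hx ▸ congrFun hidem x),
    he⟩

lemma RMinimal.surjective_of_mapHomotopic_id [Finite X] (hX : RMinimal r X) {h : X → X}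
    (hs : IsShort h) (hh : MapHomotopic r h id) : Function.Surjective h := by
  obtain ⟨k, hk, hidem⟩ := Finite.exists_pos_iterate_idempotent h
  have hrange := hX _ (isDefRetract_range_of_idempotent (hs.iterate k) hidem (hh.iterate_id hs k))
  have hsurj : Function.Surjective (h ∘ h^[k - 1]) := by
    rw [← Function.iterate_succ', Nat.succ_eq_add_one, Nat.sub_add_cancel hk]
    exact Set.range_eq_univ.mp hrange
  exact hsurj.of_comp

end Minimal

theorem stmt_6_general {X M M' : Type*} [QuasiMetric X] [QuasiMetric M] [QuasiMetric M']
    [Finite M] [Finite M'] (r : ℝ)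
    (h1 : RMinimal r M) (h2 : RHomotopyEquivalent r M X)
    (h3 : RMinimal r M') (h4 : RHomotopyEquivalent r M' X) :
    ∃ f : M → M', IsIsometry f := by
  obtain ⟨f, g, hf, hg, hgf, hfg⟩ := h2.trans h4.symm
  have hgf_surj := h1.surjective_of_mapHomotopic_id (hg.comp hf) hgf
  have hgf_bij : Function.Bijective (g ∘ f) :=
    ⟨Finite.injective_iff_surjective.2 hgf_surj, hgf_surj⟩
  have hf_surj := (h3.surjective_of_mapHomotopic_id (hf.comp hg) hfg).of_comp
  refine ⟨f, ⟨hgf_bij.injective.of_comp, hf_surj⟩, fun x x' => le_antisymm (hf x x') ?_⟩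
  calc qdist x x' = qdist (g (f x)) (g (f x')) :=
        ((hg.comp hf).qdist_eq_of_bijective hgf_bij x x').symm
    _ ≤ qdist (f x) (f x') := hg _ _

theorem stmt_6 {X M M' : Type*} [QuasiMetric X] [QuasiMetric M] [QuasiMetric M']
    [Finite X] [Finite M] [Finite M'] (r : ℝ) (hr : 0 ≤ r)
    (h1 : RMinimal r M) (h2 : RHomotopyEquivalent r M X)
    (h3 : RMinimal r M') (h4 : RHomotopyEquivalent r M' X) :
    ∃ f : M → M', IsIsometry f :=
  stmt_6_general r h1 h2 h3 h4
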